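/- Let N ⊴ G be invariant under endomorphisms φ, ψ of G, with induced maps φ̄, ψ̄ on G/N. Then the set of Reidemeister classes decomposes as a disjoint union: 𝔯(φ,ψ) = ⊔_{[ḡ] ∈ 𝔯(φ̄,ψ̄)} (μ_g ∘ î_g)(𝔯(ι_g∘φ|_N, ψ|_N)), where for a choice of representative g of each class [ḡ], î_g maps the class of x in 𝔯(ι_g∘φ|_N,ψ|_N) to the class of x in 𝔯(ι_g∘φ,ψ), and μ_g maps the class of x in 𝔯(ι_g∘φ,ψ) to the class of xg in 𝔯(φ,ψ). -/
import Mathlib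


/-- The (φ,ψ)-twisted conjugacy relation. -/
def twistRel {G : Type*} [Group G] (φ ψ : G →* G) : G → G → Prop :=
  fun a b => ∃ h : G, a = ψ h * b * (φ h)⁻¹

theorem twistRel_equivalence {G : Type*} [Group G] (φ ψ : G →* G) :
    Equivalence (twistRel φ ψ) := by
  constructor
  · intro a; exact ⟨1, by simp⟩
  · rintro a b ⟨h, rfl⟩
    exact ⟨h⁻¹, by simp [mul_assoc]⟩
  · rintro a b c ⟨h, rfl⟩ ⟨k, rfl⟩
    exact ⟨h * k, by simp [mul_assoc]⟩

theorem twistRel_mk_eq {G : Type*} [Group G] (φ ψ : G →* G) (a b : G) :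
    Quot.mk (twistRel φ ψ) a = Quot.mk (twistRel φ ψ) b ↔ twistRel φ ψ a b := by
  rw [Quot.eq]
  exact (twistRel_equivalence φ ψ).eqvGen_iff

/-- 𝔯(φ,ψ) = ⊔_{[ḡ] ∈ 𝔯(φ̄,ψ̄)} (μ_g ∘ î_g)(𝔯(ι_g∘φ|_N, ψ|_N)).
    Given a choice `rep` of representatives g of the classes [ḡ] ∈ 𝔯(φ̄,ψ̄):
    (1) μ_g ∘ î_g is well defined on 𝔯(ι_g∘φ|_N, ψ|_N),
    (2) the images cover 𝔯(φ,ψ), and (3) images of distinct classes are disjoint. -/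
theorem reidClasses_disjoint_union {G : Type*} [Group G] (N : Subgroup G) [N.Normal]
    (φ ψ : G →* G) (hφ : N ≤ N.comap φ) (hψ : N ≤ N.comap ψ)
    (rep : Quot (twistRel (QuotientGroup.map N N φ hφ) (QuotientGroup.map N N ψ hψ)) → G)
    (hrep : ∀ c, Quot.mk (twistRel (QuotientGroup.map N N φ hφ) (QuotientGroup.map N N ψ hψ))
      (↑(rep c) : G ⧸ N) = c) :
    -- (1) well-definedness of μ_g ∘ î_g
    (∀ c, ∀ n₁ ∈ N, ∀ n₂ ∈ N,
      (∃ m ∈ N, n₁ = ψ m * n₂ * (rep c * φ m * (rep c)⁻¹)⁻¹) →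
        Quot.mk (twistRel φ ψ) (n₁ * rep c) = Quot.mk (twistRel φ ψ) (n₂ * rep c)) ∧
    -- (2) the images cover 𝔯(φ,ψ)
    (∀ x : G, ∃ c, ∃ n ∈ N,
      Quot.mk (twistRel φ ψ) x = Quot.mk (twistRel φ ψ) (n * rep c)) ∧
    -- (3) the images of distinct classes are disjoint
    (∀ c₁ c₂, (∃ n₁ ∈ N, ∃ n₂ ∈ N,
      Quot.mk (twistRel φ ψ) (n₁ * rep c₁) = Quot.mk (twistRel φ ψ) (n₂ * rep c₂)) → c₁ = c₂) := by
  refine ⟨?_, ?_, ?_⟩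
  · rintro c n₁ - n₂ - ⟨m, -, rfl⟩
    apply Quot.sound
    exact ⟨m, by group⟩
  · intro x
    set c := Quot.mk _ ((x : G ⧸ N)) with hc
    have h := hrep c
    rw [twistRel_mk_eq] at h
    obtain ⟨hbar, hh⟩ := h
    obtain ⟨h, rfl⟩ := QuotientGroup.mk_surjective hbar
    simp only [QuotientGroup.map_mk] at hh
    have : ((rep c : G ⧸ N)) = ((ψ h * x * (φ h)⁻¹ : G) : G ⧸ N) := by
      simpa using hh
    rw [QuotientGroup.eq] at this
    refine ⟨c, ψ h * x * (φ h)⁻¹ * (rep c)⁻¹, ?_, ?_⟩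
    · have h2 := Subgroup.Normal.conj_mem ‹N.Normal› _ this (rep c)
      simpa [mul_assoc] using h2
    · rw [twistRel_mk_eq]
      refine ⟨h⁻¹, by simp [mul_assoc]⟩
  · rintro c₁ c₂ ⟨n₁, hn₁, n₂, hn₂, heq⟩
    rw [twistRel_mk_eq] at heq
    obtain ⟨h, hh⟩ := heq
    rw [← hrep c₁, ← hrep c₂]
    apply Quot.sound
    refine ⟨(h : G ⧸ N), ?_⟩
    have : ((n₁ * rep c₁ : G) : G ⧸ N) = ((ψ h * (n₂ * rep c₂) * (φ h)⁻¹ : G) : G ⧸ N) := by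
      exact_mod_cast congrArg _ hh
    simpa [QuotientGroup.eq_iff_div_mem, QuotientGroup.map_mk,
      (QuotientGroup.eq_one_iff (n₁ : G ⧸ N)).mpr, hn₁, hn₂,
      QuotientGroup.mk_mul, QuotientGroup.mk_inv,
      (QuotientGroup.eq_one_iff _).mpr hn₁, (QuotientGroup.eq_one_iff _).mpr hn₂] using this
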